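/- arXiv:2310.05679 — 6 statements merged into one kernel-verified Lean document; each statement's English description precedes it below -/
import Mathlib

section
/- For every d ∈ (0,1), the Henrick mapping function g_d(ω) = ω·(d + d² − 3dω + ω²)/(d² + (1 − 2d)ω) is strictly increasing on the interval [0,1]; that is, for all ω₁, ω₂ ∈ [0,1] with ω₁ < ω₂ one has g_d(ω₁) < g_d(ω₂). -/
lemma Qaux (d u v : ℝ) (hd0 : 0 < d) (hd1 : d < 1) (hu : -d ≤ u) (hv : v ≤ 1 - d)
    (huv : u < v) :
    0 < d * (1 - d) * (u ^ 2 + u * v + v ^ 2) + (1 - 2 * d) * (u * v * (u + v)) := by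
  have hd1' : 0 < 1 - d := by linarith
  have hde : 0 < d * (1 - d) := mul_pos hd0 hd1'
  rcases le_or_gt (2 * d) 1 with hc | hc
  · -- 1 - 2d ≥ 0
    have hc' : 0 ≤ 1 - 2 * d := by linarith
    rcases le_or_gt 0 u with hu0 | hu0
    · -- 0 ≤ u < v
      have hv0 : 0 < v := lt_of_le_of_lt hu0 huv
      nlinarith [mul_nonneg (mul_nonneg hu0 hv0.le) (by linarith : (0:ℝ) ≤ u + v),
        mul_pos hde (mul_pos hv0 hv0), mul_nonneg hde.le (mul_nonneg hu0 hu0),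
        mul_nonneg hde.le (mul_nonneg hu0 hv0.le)]
    · rcases le_or_gt v 0 with hv0 | hv0
      · -- u < v ≤ 0, uv ≥ 0, u+v ≥ -2d
        have huv0 : 0 ≤ u * v := by nlinarith [mul_nonneg (neg_nonneg.mpr hu0.le) (neg_nonneg.mpr hv0)]
        have hs : -(2 * d) ≤ u + v := by linarith
        nlinarith [mul_nonneg hc' (mul_nonneg huv0 (by linarith : 0 ≤ u + v + 2 * d)),
          mul_pos hde (mul_pos (neg_pos.mpr hu0) (neg_pos.mpr hu0)), sq_nonneg (u - v), sq_nonneg (u + v),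
          mul_nonneg (mul_nonneg hd0.le hd0.le) huv0,
          mul_nonneg hde.le (sq_nonneg (u - v)), mul_nonneg hd0.le (sq_nonneg (u - v)),
          mul_nonneg hd0.le (mul_nonneg (mul_nonneg hd0.le hd0.le) huv0)]
      · -- u < 0 < v
        rcases le_or_gt (u + v) 0 with hs | hs
        · nlinarith [mul_nonneg hc' (mul_nonneg (mul_nonneg (neg_nonneg.mpr hu0.le) hv0.le)
            (neg_nonneg.mpr hs)), mul_pos hde (mul_pos hv0 hv0),
            mul_nonneg hde.le (sq_nonneg (u - v)), mul_nonneg hde.le (sq_nonneg (u + v))]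
        · -- u<0<v, u+v>0 : certificate with t = -u ≤ d
          have ht : -u ≤ d := by linarith
          have hvt : 0 < v + u := by linarith
          nlinarith [mul_nonneg hc' (mul_nonneg (mul_nonneg (sub_nonneg.mpr ht)
              hv0.le) hvt.le),
            mul_pos (mul_pos hd0 hd1') (mul_pos (neg_pos.mpr hu0) (neg_pos.mpr hu0)),
            mul_pos (mul_pos hd0 hd0) (mul_pos hv0 hvt),
            mul_nonneg (mul_nonneg hd0.le hc') (mul_nonneg hv0.le hvt.le)]
  · -- 1 - 2d < 0
    have hc' : 0 ≤ 2 * d - 1 := by linarith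
    rcases le_or_gt v 0 with hv0 | hv0
    · have huv0 : 0 ≤ u * v := by nlinarith [mul_nonneg (neg_nonneg.mpr (by linarith : u ≤ 0)) (neg_nonneg.mpr hv0)]
      have hu0 : u < 0 := lt_of_lt_of_le huv hv0
      nlinarith [mul_nonneg hc' (mul_nonneg huv0 (by linarith : 0 ≤ -(u + v))),
        mul_pos hde (mul_pos (neg_pos.mpr hu0) (neg_pos.mpr hu0)),
        mul_nonneg hde.le (sq_nonneg (u - v))]
    · rcases le_or_gt 0 u with hu0 | hu0
      · -- 0 ≤ u, u+v ≤ 2(1-d)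
        have huv0 : 0 ≤ u * v := mul_nonneg hu0 hv0.le
        nlinarith [mul_nonneg hc' (mul_nonneg huv0 (by nlinarith : 0 ≤ 2 * (1 - d) - (u + v))),
          mul_pos hde (mul_pos hv0 hv0), sq_nonneg (u - v),
          mul_nonneg hd1'.le (sq_nonneg (u - v)),
          mul_nonneg hd1'.le (mul_nonneg (mul_nonneg hd1'.le hd1'.le) huv0),
          mul_nonneg (mul_nonneg hd1'.le hd1'.le) huv0]
      · rcases le_or_gt 0 (u + v) with hs | hs
        · nlinarith [mul_nonneg hc' (mul_nonneg (mul_nonneg (neg_nonneg.mpr hu0.le) hv0.le) hs),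
            mul_pos hde (mul_pos hv0 hv0), mul_nonneg hde.le (sq_nonneg (u - v)),
            mul_nonneg hde.le (sq_nonneg (u + v))]
        · -- u<0<v, u+v<0: t = v ≤ 1-d, s = -u > t
          have hst : 0 < -u - v := by linarith
          nlinarith [mul_nonneg hc' (mul_nonneg (mul_nonneg (sub_nonneg.mpr hv)
              (neg_nonneg.mpr hu0.le)) hst.le),
            mul_pos (mul_pos hd0 hd1') (mul_pos hv0 hv0),
            mul_pos (mul_pos hd1' hd1') (mul_pos (neg_pos.mpr hu0) hst),
            mul_nonneg (mul_nonneg hd1'.le hc') (mul_nonneg (neg_nonneg.mpr hu0.le) hst.le)]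

/-- The Henrick mapping function used in the WENO-M scheme. -/
noncomputable def henrickG (d ω : ℝ) : ℝ :=
  ω * (d + d ^ 2 - 3 * d * ω + ω ^ 2) / (d ^ 2 + (1 - 2 * d) * ω)

/-- For every `d ∈ (0,1)`, the Henrick mapping function is strictly increasing on `[0,1]`. -/
theorem stmt1 (d : ℝ) (hd0 : 0 < d) (hd1 : d < 1)
    (ω₁ ω₂ : ℝ) (h1 : ω₁ ∈ Set.Icc (0 : ℝ) 1) (h2 : ω₂ ∈ Set.Icc (0 : ℝ) 1)
    (hlt : ω₁ < ω₂) :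
    henrickG d ω₁ < henrickG d ω₂ := by
  obtain ⟨ha0, ha1⟩ := h1
  obtain ⟨hb0, hb1⟩ := h2
  have hDa : 0 < d ^ 2 + (1 - 2 * d) * ω₁ := by
    nlinarith [mul_nonneg (sub_nonneg.mpr ha1) (sq_nonneg d), mul_nonneg ha0 (sq_nonneg (1 - d)),
      sq_nonneg d, sq_nonneg (1 - d), mul_pos hd0 hd0, mul_pos (sub_pos.mpr hd1) (sub_pos.mpr hd1)]
  have hDb : 0 < d ^ 2 + (1 - 2 * d) * ω₂ := by
    nlinarith [mul_nonneg (sub_nonneg.mpr hb1) (sq_nonneg d), mul_nonneg hb0 (sq_nonneg (1 - d)),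
      sq_nonneg d, sq_nonneg (1 - d), mul_pos hd0 hd0, mul_pos (sub_pos.mpr hd1) (sub_pos.mpr hd1)]
  have hQ := Qaux d (ω₁ - d) (ω₂ - d) hd0 hd1 (by linarith) (by linarith) (by linarith)
  rw [henrickG, henrickG, div_lt_div_iff₀ hDa hDb]
  nlinarith [mul_pos (sub_pos.mpr hlt) hQ]
end

section
/- For every d ∈ (0,1), the Henrick mapping function g_d(ω) = ω·(d + d² − 3dω + ω²)/(d² + (1 − 2d)ω) satisfies g_d(ω) > ω for all ω ∈ (0, d) and g_d(ω) < ω for all ω ∈ (d, 1). -/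
/-- For every `d ∈ (0,1)`, the Henrick mapping function satisfies `g_d(ω) > ω` on `(0, d)`
and `g_d(ω) < ω` on `(d, 1)`. -/
theorem stmt2 (d : ℝ) (hd0 : 0 < d) (hd1 : d < 1) :
    (∀ ω : ℝ, 0 < ω → ω < d → ω < henrickG d ω) ∧
    (∀ ω : ℝ, d < ω → ω < 1 → henrickG d ω < ω) := by
  constructor
  · intro ω h0 hωd
    have hD : 0 < d ^ 2 + (1 - 2 * d) * ω := by nlinarith
    rw [henrickG, lt_div_iff₀ hD]
    nlinarith [mul_pos (mul_pos h0 (sub_pos.2 hωd)) (sub_pos.2 (hωd.trans hd1))]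
  · intro ω hdω hω1
    have hD : 0 < d ^ 2 + (1 - 2 * d) * ω := by nlinarith
    rw [henrickG, div_lt_iff₀ hD]
    nlinarith [mul_pos (mul_pos (hd0.trans hdω) (sub_pos.2 hdω)) (sub_pos.2 hω1)]
end

section
/- In the setting of the first Euler stage for the step-function Riemann problem, suppose δ = u_L − u_R > 0, ν > 0, and all the nonlinear weights involved are strictly positive (and each interface triple sums to 1). Define the errors e_j = ū¹_j − ū^exact_j, where ū^exact_j = u_L for j < 0, ū^exact_0 = u_R + νδ, and ū^exact_j = u_R for j > 0. Then e_{−2} = −(ν/6)ω₂^{(−2)}δ < 0, e_{−1} = (ν/6)[ω₂^{(−2)} + 2(ω₁^{(−1)} + 2ω₂^{(−1)})]δ > 0, e_1 = −(ν/6)[(5ω₀^{(0)} + ω₁^{(0)}) + 2ω₀^{(1)}]δ < 0, and e_2 = (ν/3)ω₀^{(1)}δ > 0. -/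
/-- Signs of the errors of the first Euler stage of the TVD Runge–Kutta step for the
step-function Riemann problem, when `δ = u_L - u_R > 0`, `ν > 0`, and all nonlinear
weights are strictly positive with each interface triple summing to `1`. -/
theorem stmt8 (uL uR ν : ℝ) (ω₀ ω₁ ω₂ : ℤ → ℝ)
    (hδ : 0 < uL - uR) (hν : 0 < ν)
    (hpos : ∀ j, 0 < ω₀ j ∧ 0 < ω₁ j ∧ 0 < ω₂ j)
    (hsum : ∀ j, ω₀ j + ω₁ j + ω₂ j = 1) :
    let δ : ℝ := uL - uR
    let u0 : ℤ → ℝ := fun j => if j < 0 then uL else uR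
    let flux : ℤ → ℝ := fun j =>
      ω₀ j * ((1 / 3) * u0 (j - 2) - (7 / 6) * u0 (j - 1) + (11 / 6) * u0 j)
        + ω₁ j * (-(1 / 6) * u0 (j - 1) + (5 / 6) * u0 j + (1 / 3) * u0 (j + 1))
        + ω₂ j * ((1 / 3) * u0 j + (5 / 6) * u0 (j + 1) - (1 / 6) * u0 (j + 2))
    let u1 : ℤ → ℝ := fun j => u0 j - ν * (flux j - flux (j - 1))
    let uExact : ℤ → ℝ := fun j => if j < 0 then uL else if j = 0 then uR + ν * δ else uR
    let e : ℤ → ℝ := fun j => u1 j - uExact j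
    (e (-2) = -(ν / 6) * ω₂ (-2) * δ ∧ e (-2) < 0) ∧
    (e (-1) = (ν / 6) * (ω₂ (-2) + 2 * (ω₁ (-1) + 2 * ω₂ (-1))) * δ ∧ 0 < e (-1)) ∧
    (e 1 = -(ν / 6) * ((5 * ω₀ 0 + ω₁ 0) + 2 * ω₀ 1) * δ ∧ e 1 < 0) ∧
    (e 2 = (ν / 3) * ω₀ 1 * δ ∧ 0 < e 2) := by
  intro δ u0 flux u1 uExact e
  have h3 := hsum (-3); have h2 := hsum (-2); have h1 := hsum (-1)
  have h0 := hsum 0; have hp1 := hsum 1; have hp2 := hsum 2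
  obtain ⟨a2,b2,c2⟩ := hpos (-2); obtain ⟨a1,b1,c1⟩ := hpos (-1)
  obtain ⟨a0,b0,c0⟩ := hpos 0; obtain ⟨ap,bp,cp⟩ := hpos 1
  have hm2 : e (-2) = -(ν / 6) * ω₂ (-2) * δ := by
    simp only [e, u1, uExact, flux, u0, δ]
    norm_num
    linear_combination (ν*uL)*h2 + (-ν*uL)*h3
  have hm1 : e (-1) = (ν / 6) * (ω₂ (-2) + 2 * (ω₁ (-1) + 2 * ω₂ (-1))) * δ := by
    simp only [e, u1, uExact, flux, u0, δ]
    norm_num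
    linear_combination (-ν*uL)*h1 + (ν*uL)*h2
  have hq1 : e 1 = -(ν / 6) * ((5 * ω₀ 0 + ω₁ 0) + 2 * ω₀ 1) * δ := by
    simp only [e, u1, uExact, flux, u0, δ]
    norm_num
    linear_combination (ν*uR)*hp1 + (-ν*uR)*h0
  have hq2 : e 2 = (ν / 3) * ω₀ 1 * δ := by
    simp only [e, u1, uExact, flux, u0, δ]
    norm_num
    linear_combination (-ν*uR)*hp2 + (ν*uR)*hp1
  have hδ' : (0:ℝ) < δ := hδ
  refine ⟨⟨hm2, ?_⟩, ⟨hm1, ?_⟩, ⟨hq1, ?_⟩, ⟨hq2, ?_⟩⟩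
  · rw [hm2]
    show -(ν / 6) * ω₂ (-2) * (uL - uR) < 0
    linarith [mul_pos (mul_pos hν c2) hδ]
  · rw [hm1]
    show 0 < ν / 6 * (ω₂ (-2) + 2 * (ω₁ (-1) + 2 * ω₂ (-1))) * (uL - uR)
    linarith [mul_pos (mul_pos hν c2) hδ, mul_pos (mul_pos hν b1) hδ,
      mul_pos (mul_pos hν c1) hδ]
  · rw [hq1]
    show -(ν / 6) * (5 * ω₀ 0 + ω₁ 0 + 2 * ω₀ 1) * (uL - uR) < 0
    linarith [mul_pos (mul_pos hν a0) hδ, mul_pos (mul_pos hν b0) hδ,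
      mul_pos (mul_pos hν ap) hδ]
  · rw [hq2]
    show 0 < ν / 3 * ω₀ 1 * (uL - uR)
    linarith [mul_pos (mul_pos hν ap) hδ]
end

section
/- Let v : ℝ → ℝ be five times continuously differentiable and let x* ∈ ℝ. For h > 0 and j = −2, −1, 0, 1, 2 define the cell averages A_j(h) = (1/h)∫_{x*+(j−1)h}^{x*+jh} v(t) dt. Then the fifth-order big-stencil reconstruction error (1/30)A₋₂(h) − (13/60)A₋₁(h) + (47/60)A₀(h) + (9/20)A₁(h) − (1/20)A₂(h) − v(x*) is O(h⁵) as h → 0⁺. -/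
/-!
Each cell average is a difference quotient of the primitive `V t = ∫ s in x..t, v s`, so `h` times
the reconstruction error is `∑ⱼ wⱼ V (x + j h) - h V' x` with weights
`w = (-1/30, 1/4, -1, 1/3, 1/2, -1/20)` at `j = -3, …, 2`. These weights satisfy
`∑ⱼ wⱼ jᵏ = δₖ₁` for `k ≤ 5`, i.e. the formula is exact on polynomials of degree `≤ 5`, so
expanding the `C⁶` function `V` to order `6` at `x` leaves `O(h⁶)`; dividing by `h` gives `O(h⁵)`.
-/

open Filter Topology Asymptotics Finset Nat

variable {E : Type*} [NormedAddCommGroup E] [NormedSpace ℝ E]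

theorem taylorWithinEval_univ_add (f : ℝ → E) (n : ℕ) (x y : ℝ) :
    taylorWithinEval f n Set.univ x (x + y) =
      ∑ k ∈ range (n + 1), ((k ! : ℝ)⁻¹ * y ^ k) • iteratedDeriv k f x := by
  simp [taylor_within_apply, iteratedDerivWithin_univ]

theorem isLittleO_sub_taylorWithinEval_comp_mul {f : ℝ → E} {n : ℕ} (hf : ContDiff ℝ n f)
    (x a : ℝ) :
    (fun h => f (x + a * h) - taylorWithinEval f n Set.univ x (x + a * h)) =o[𝓝 0]
      fun h => h ^ n := by
  have hlim : Tendsto (fun h : ℝ => x + a * h) (𝓝 0) (𝓝 x) :=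
    (by fun_prop : Continuous fun h : ℝ => x + a * h).tendsto' 0 x (by simp)
  refine ((taylor_isLittleO_univ hf).comp_tendsto hlim).trans_isBigO ?_
  simpa only [Function.comp_def, add_sub_cancel_left, mul_pow] using
    isBigO_const_mul_self (a ^ n) (fun h : ℝ => h ^ n) (𝓝 0)

theorem isBigO_sum_smul_sub_smul_deriv_of_moments {ι : Type*} [Fintype ι] (w a : ι → ℝ) {n : ℕ}
    {f : ℝ → E} (hf : ContDiff ℝ (n + 1) f) (x : ℝ)
    (hmom : ∀ k ≤ n, ∑ i, w i * a i ^ k = if k = 1 then 1 else 0) :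
    (fun h => ∑ i, w i • f (x + a i * h) - h • deriv f x) =O[𝓝 0] fun h => h ^ (n + 1) := by
  set T := taylorWithinEval f (n + 1) Set.univ x
  -- Taylor remainders, plus the Taylor polynomials regrouped by the moments of the stencil
  have hsplit : ∀ h : ℝ, ∑ i, w i • f (x + a i * h) - h • deriv f x =
      ∑ i, w i • (f (x + a i * h) - T (x + a i * h)) +
        ∑ k ∈ range (n + 2), ((k ! : ℝ)⁻¹ * h ^ k *
          (∑ i, w i * a i ^ k - if k = 1 then 1 else 0)) • iteratedDeriv k f x := by
    intro h
    have hdelta : ∑ k ∈ range (n + 2), ((k ! : ℝ)⁻¹ * h ^ k * if k = 1 then 1 else 0) •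
        iteratedDeriv k f x = h • deriv f x := by
      simp [mul_ite, ite_smul]
    have hcoeff : ∀ i k, w i * ((k ! : ℝ)⁻¹ * (a i * h) ^ k) =
        (k ! : ℝ)⁻¹ * h ^ k * (w i * a i ^ k) := fun i k => by ring
    simp only [T, taylorWithinEval_univ_add, smul_sub, sum_sub_distrib, mul_sub, sub_smul,
      Finset.smul_sum, smul_smul, mul_sum, sum_smul, hcoeff, hdelta]
    rw [sum_comm (s := univ)]
    abel
  rw [funext hsplit]
  have hf' : ContDiff ℝ (n + 1 : ℕ) f := by exact_mod_cast hf
  refine IsBigO.add (IsBigO.fun_sum fun i _ =>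
    ((isLittleO_sub_taylorWithinEval_comp_mul hf' x (a i)).isBigO.const_smul_left (w i)))
    (IsBigO.fun_sum fun k hk => ?_)
  rcases Nat.lt_succ_iff_lt_or_eq.mp (mem_range.mp hk) with hlt | rfl
  · simpa [hmom k (Nat.lt_succ_iff.mp hlt)] using isBigO_zero _ _
  · have hpoly : (fun h : ℝ => ((n + 1)! : ℝ)⁻¹ * h ^ (n + 1) *
        (∑ i, w i * a i ^ (n + 1) - if n + 1 = 1 then 1 else 0)) =O[𝓝 0] fun h => h ^ (n + 1) := by
      simpa only [mul_right_comm _ _ (_ - _)] using isBigO_const_mul_self _ _ _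
    simpa using hpoly.smul (isBigO_const_one ℝ (iteratedDeriv (n + 1) f x) (𝓝 0))

/-- Fifth-order accuracy of the big-stencil finite volume reconstruction at the right cell
boundary of the middle cell, for a `C⁵` function, as the cell size `h → 0⁺`.
Here `A j h = (1/h) ∫_{x+(j-1)h}^{x+jh} v`. -/
theorem stmt10 (v : ℝ → ℝ) (hv : ContDiff ℝ 5 v) (x : ℝ) :
    (fun h : ℝ =>
        (1 / 30) * ((1 / h) * ∫ t in (x + (-3) * h)..(x + (-2) * h), v t)
          - (13 / 60) * ((1 / h) * ∫ t in (x + (-2) * h)..(x + (-1) * h), v t)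
          + (47 / 60) * ((1 / h) * ∫ t in (x + (-1) * h)..(x + 0 * h), v t)
          + (9 / 20) * ((1 / h) * ∫ t in (x + 0 * h)..(x + 1 * h), v t)
          - (1 / 20) * ((1 / h) * ∫ t in (x + 1 * h)..(x + 2 * h), v t)
          - v x)
      =O[𝓝[>] (0 : ℝ)] (fun h => h ^ 5) := by
  set V : ℝ → ℝ := fun t => ∫ s in x..t, v s
  have hV : ∀ t, HasDerivAt V (v t) t := fun t =>
    (hv.continuous.integral_hasStrictDerivAt x t).hasDerivAt
  have hVsmooth : ContDiff ℝ (5 + 1) V :=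
    contDiff_succ_iff_deriv.mpr ⟨fun t => (hV t).differentiableAt, by simp,
      by rwa [funext fun t => (hV t).deriv]⟩
  have hcell : ∀ a b, ∫ t in a..b, v t = V b - V a := fun a b =>
    intervalIntegral.integral_eq_sub_of_hasDerivAt (fun t _ => hV t)
      (hv.continuous.intervalIntegrable a b)
  let w : Fin 6 → ℝ := ![-1 / 30, 1 / 4, -1, 1 / 3, 1 / 2, -1 / 20]
  let a : Fin 6 → ℝ := ![-3, -2, -1, 0, 1, 2]
  have hmom : ∀ k ≤ 5, ∑ i, w i * a i ^ k = if k = 1 then 1 else 0 := by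
    intro k hk
    interval_cases k <;> simp [w, a, Fin.sum_univ_succ] <;> norm_num
  have hS := (isBigO_sum_smul_sub_smul_deriv_of_moments w a hVsmooth x hmom).mono
    (nhdsWithin_le_nhds (s := Set.Ioi 0))
  rw [(hV x).deriv] at hS
  refine ((isBigO_refl (fun h : ℝ => h⁻¹) _).mul hS).congr' ?_ ?_
  · filter_upwards [self_mem_nhdsWithin] with h (hh : 0 < h)
    simp [hcell, w, a, Fin.sum_univ_succ]
    field_simp
    ring
  · filter_upwards [self_mem_nhdsWithin] with h (hh : 0 < h)
    field_simp
end

section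
/- Fix real numbers β₀, β₁, β₂ ≥ 0, ε > 0, q ≥ 1, and linear weights d₀, d₁, d₂ > 0 with d₀ + d₁ + d₂ = 1. For p > 0 define τ(p) = (1/p)|ln((1 + β₀)/(1 + β₂))| and α_s(p) = d_s(1 + (τ(p)/(β_s + ε))^q) for s = 0, 1, 2. Then for each s, the WENO-ZL nonlinear weight ω_s(p) = α_s(p)/(α₀(p) + α₁(p) + α₂(p)) tends to the linear weight d_s as p → ∞. -/
open Filter Topology

theorem tendsto_div_sum_of_tendsto {ι α K : Type*} [Fintype ι] [Field K] [TopologicalSpace K]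
    [IsTopologicalDivisionRing K] {l : Filter α} {a : ι → α → K} {d : ι → K}
    (ha : ∀ r, Tendsto (a r) l (𝓝 (d r))) (hd : ∑ r, d r ≠ 0) (s : ι) :
    Tendsto (fun x => a s x / ∑ r, a r x) l (𝓝 (d s / ∑ r, d r)) :=
  (ha s).div (tendsto_finsetSum Finset.univ fun r _ => ha r) hd

theorem tendsto_one_div_mul_div_rpow_atTop (c b : ℝ) {q : ℝ} (hq : 0 < q) :
    Tendsto (fun p : ℝ => ((1 / p) * c / b) ^ q) atTop (𝓝 0) := by
  have hbase : Tendsto (fun p : ℝ => (1 / p) * c / b) atTop (𝓝 0) := by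
    simpa using (tendsto_inv_atTop_zero.mul_const c).div_const b
  simpa [Real.zero_rpow hq.ne'] using hbase.rpow_const (Or.inr hq.le)

theorem tendsto_mul_one_add_rpow_atTop (d c b : ℝ) {q : ℝ} (hq : 0 < q) :
    Tendsto (fun p : ℝ => d * (1 + ((1 / p) * c / b) ^ q)) atTop (𝓝 d) := by
  simpa using ((tendsto_one_div_mul_div_rpow_atTop c b hq).const_add 1).const_mul d

theorem stmt18_general (β d : Fin 3 → ℝ)
    (ε q : ℝ) (hq : 1 ≤ q)
    (hdsum : ∑ s, d s = 1) :
    ∀ s : Fin 3,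
      Tendsto (fun p : ℝ =>
          (d s * (1 + ((1 / p) * |Real.log ((1 + β 0) / (1 + β 2))| / (β s + ε)) ^ q))
            / (∑ r : Fin 3,
                d r * (1 + ((1 / p) * |Real.log ((1 + β 0) / (1 + β 2))| / (β r + ε)) ^ q)))
        atTop (𝓝 (d s)) := by
  intro s
  have hα : ∀ r, Tendsto (fun p : ℝ =>
      d r * (1 + ((1 / p) * |Real.log ((1 + β 0) / (1 + β 2))| / (β r + ε)) ^ q))
      atTop (𝓝 (d r)) :=
    fun r => tendsto_mul_one_add_rpow_atTop _ _ _ (zero_lt_one.trans_le hq)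
  simpa [hdsum] using tendsto_div_sum_of_tendsto hα (by simp [hdsum]) s

/-- As the tuner `p → ∞`, each WENO-ZL nonlinear weight tends to the corresponding
linear weight. -/
theorem stmt18 (β d : Fin 3 → ℝ) (hβ : ∀ s, 0 ≤ β s)
    (ε q : ℝ) (hε : 0 < ε) (hq : 1 ≤ q)
    (hd : ∀ s, 0 < d s) (hdsum : ∑ s, d s = 1) :
    ∀ s : Fin 3,
      Tendsto (fun p : ℝ =>
          (d s * (1 + ((1 / p) * |Real.log ((1 + β 0) / (1 + β 2))| / (β s + ε)) ^ q))
            / (∑ r : Fin 3,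
                d r * (1 + ((1 / p) * |Real.log ((1 + β 0) / (1 + β 2))| / (β r + ε)) ^ q)))
        atTop (𝓝 (d s)) :=
  stmt18_general β d ε q hq hdsum
end

section
/- Let Δ > 0, ε > 0, q ≥ 1 be real numbers and let β_r > β_s ≥ 0. Then the function B(p) = [1 + (Δ/(p(β_r + ε)))^q] / [1 + (Δ/(p(β_s + ε)))^q] is strictly increasing in p on (0, ∞); that is, for 0 < p₁ < p₂ one has B(p₁) < B(p₂). -/
/-- The weight-ratio function `B(p) = (1 + (Δ/(p(β_r+ε)))^q)/(1 + (Δ/(p(β_s+ε)))^q)` of the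
WENO-ZL analysis is strictly increasing in `p` on `(0, ∞)` when `β_r > β_s ≥ 0`. -/
theorem stmt19 (Δ ε q βr βs : ℝ) (hΔ : 0 < Δ) (hε : 0 < ε) (hq : 1 ≤ q)
    (hβs : 0 ≤ βs) (hβ : βs < βr)
    (p₁ p₂ : ℝ) (hp₁ : 0 < p₁) (hp : p₁ < p₂) :
    (1 + (Δ / (p₁ * (βr + ε))) ^ q) / (1 + (Δ / (p₁ * (βs + ε))) ^ q)
      < (1 + (Δ / (p₂ * (βr + ε))) ^ q) / (1 + (Δ / (p₂ * (βs + ε))) ^ q) := by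
  have hp₂ : 0 < p₂ := hp₁.trans hp
  have hq0 : 0 < q := lt_of_lt_of_le one_pos hq
  have hr : 0 < βr + ε := by linarith
  have hs : 0 < βs + ε := by linarith
  have hrw : ∀ p β : ℝ, 0 < p → 0 < β →
      (Δ / (p * β)) ^ q = (Δ / p) ^ q * (1 / β) ^ q := by
    intro p β hp hβ'
    rw [← Real.mul_rpow (by positivity) (by positivity)]
    congr 1
    field_simp
  rw [hrw p₁ _ hp₁ hr, hrw p₁ _ hp₁ hs, hrw p₂ _ hp₂ hr, hrw p₂ _ hp₂ hs]
  set x₁ := (Δ / p₁) ^ q with hx₁def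
  set x₂ := (Δ / p₂) ^ q with hx₂def
  set cr := (1 / (βr + ε)) ^ q with hcrdef
  set cs := (1 / (βs + ε)) ^ q with hcsdef
  have hx₁ : 0 < x₁ := Real.rpow_pos_of_pos (by positivity) q
  have hx₂ : 0 < x₂ := Real.rpow_pos_of_pos (by positivity) q
  have hcr : 0 < cr := Real.rpow_pos_of_pos (by positivity) q
  have hcs : 0 < cs := Real.rpow_pos_of_pos (by positivity) q
  have hx : x₂ < x₁ := by
    apply Real.rpow_lt_rpow (by positivity) _ hq0
    exact div_lt_div_of_pos_left hΔ hp₁ hp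
  have hc : cr < cs := by
    apply Real.rpow_lt_rpow (by positivity) _ hq0
    apply div_lt_div_of_pos_left one_pos hs (by linarith)
  rw [div_lt_div_iff₀ (by positivity) (by positivity)]
  nlinarith [mul_pos (sub_pos.2 hx) (sub_pos.2 hc)]
end
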